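/- arXiv:2601.07332 — 4 statements merged into one kernel-verified Lean document; each statement's English description precedes it below -/
import Mathlib

section
/- For every matrix g ∈ SL₃(F), the map on the split-octonion algebra O sending the Zorn matrix (α, u; v, β) to (α, ug; v·(g⁻¹)ᵀ, β), where u and v are regarded as row vectors, is an F-algebra automorphism of O. -/
@[ext]
structure Zorn (F : Type*) where
  x1 : F
  u : Fin 3 → F
  v : Fin 3 → F
  x2 : F

namespace Zorn

variable {F : Type*} [Field F]

/-- Dot product on `F³`. -/
def dot (x y : Fin 3 → F) : F := x 0 * y 0 + x 1 * y 1 + x 2 * y 2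

/-- Cross product on `F³`. -/
def cross (x y : Fin 3 → F) : Fin 3 → F :=
  ![x 1 * y 2 - x 2 * y 1, x 2 * y 0 - x 0 * y 2, x 0 * y 1 - x 1 * y 0]

instance : Add (Zorn F) :=
  ⟨fun a b => ⟨a.x1 + b.x1, a.u + b.u, a.v + b.v, a.x2 + b.x2⟩⟩

instance : Zero (Zorn F) := ⟨⟨0, 0, 0, 0⟩⟩

instance : Neg (Zorn F) := ⟨fun a => ⟨-a.x1, -a.u, -a.v, -a.x2⟩⟩

instance : Sub (Zorn F) :=
  ⟨fun a b => ⟨a.x1 - b.x1, a.u - b.u, a.v - b.v, a.x2 - b.x2⟩⟩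

instance : SMul F (Zorn F) :=
  ⟨fun c a => ⟨c * a.x1, c • a.u, c • a.v, c * a.x2⟩⟩

/-- Zorn vector-matrix multiplication. -/
instance : Mul (Zorn F) :=
  ⟨fun a b =>
    ⟨a.x1 * b.x1 + dot a.u b.v,
     a.x1 • b.u + b.x2 • a.u - cross a.v b.v,
     b.x1 • a.v + a.x2 • b.v + cross a.u b.u,
     a.x2 * b.x2 + dot a.v b.u⟩⟩

instance : One (Zorn F) := ⟨⟨1, 0, 0, 1⟩⟩

@[simp] lemma add_def (a b : Zorn F) :
    a + b = ⟨a.x1 + b.x1, a.u + b.u, a.v + b.v, a.x2 + b.x2⟩ := rfl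
@[simp] lemma zero_def : (0 : Zorn F) = ⟨0, 0, 0, 0⟩ := rfl
@[simp] lemma neg_def (a : Zorn F) : -a = ⟨-a.x1, -a.u, -a.v, -a.x2⟩ := rfl
@[simp] lemma sub_def (a b : Zorn F) :
    a - b = ⟨a.x1 - b.x1, a.u - b.u, a.v - b.v, a.x2 - b.x2⟩ := rfl
@[simp] lemma smul_def (c : F) (a : Zorn F) :
    c • a = ⟨c * a.x1, c • a.u, c • a.v, c * a.x2⟩ := rfl

instance : AddCommGroup (Zorn F) where
  add_assoc a b c := by ext <;> simp [add_assoc]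
  zero_add a := by ext <;> simp
  add_zero a := by ext <;> simp
  add_comm a b := by ext <;> simp [add_comm]
  neg_add_cancel a := by ext <;> simp
  sub_eq_add_neg a b := by ext <;> simp [sub_eq_add_neg]
  nsmul := nsmulRec
  zsmul := zsmulRec

instance : Module F (Zorn F) where
  one_smul a := by ext <;> simp
  mul_smul c d a := by ext <;> simp [mul_assoc, mul_smul]
  smul_zero c := by ext <;> simp
  smul_add c a b := by ext <;> simp [mul_add]
  add_smul c d a := by ext <;> simp [add_mul, add_smul]
  zero_smul a := by ext <;> simp

/-- The trace of a split octonion. -/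
def trace (a : Zorn F) : F := a.x1 + a.x2

/-- The norm of a split octonion. -/
def norm (a : Zorn F) : F := a.x1 * a.x2 - dot a.u a.v

/-- The conjugate of a split octonion. -/
def conj (a : Zorn F) : Zorn F := ⟨a.x2, -a.u, -a.v, a.x1⟩

end Zorn

namespace Zorn

/-- The map attached to `g ∈ SL₃(F)`, sending `(α, u; v, β)` to `(α, ug; v(g⁻¹)ᵀ, β)`,
where `u, v` are regarded as row vectors. -/
def slMap {F : Type*} [Field F] (g : Matrix.SpecialLinearGroup (Fin 3) F) (a : Zorn F) :
    Zorn F :=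
  ⟨a.x1, Matrix.vecMul a.u (g : Matrix (Fin 3) (Fin 3) F),
    Matrix.vecMul a.v (Matrix.transpose ((g⁻¹ : Matrix.SpecialLinearGroup (Fin 3) F) :
      Matrix (Fin 3) (Fin 3) F)), a.x2⟩

end Zorn


namespace Zorn

open Matrix

variable {F : Type*} [Field F]

lemma mul_def' (a b : Zorn F) : a * b =
    ⟨a.x1 * b.x1 + dot a.u b.v,
     a.x1 • b.u + b.x2 • a.u - cross a.v b.v,
     b.x1 • a.v + a.x2 • b.v + cross a.u b.u,
     a.x2 * b.x2 + dot a.v b.u⟩ := rfl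

lemma one_def' : (1 : Zorn F) = ⟨1, 0, 0, 1⟩ := rfl

lemma dotA (u v : Fin 3 → F) (M : Matrix (Fin 3) (Fin 3) F) :
    dot (vecMul u M) (vecMul v M.adjugateᵀ) = M.det * dot u v := by
  simp [dot, vecMul, dotProduct, Fin.sum_univ_three, adjugate_fin_three, det_fin_three]
  ring

lemma dotA' (v u : Fin 3 → F) (M : Matrix (Fin 3) (Fin 3) F) :
    dot (vecMul v M.adjugateᵀ) (vecMul u M) = M.det * dot v u := by
  simp [dot, vecMul, dotProduct, Fin.sum_univ_three, adjugate_fin_three, det_fin_three]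
  ring

lemma crossB (u u' : Fin 3 → F) (M : Matrix (Fin 3) (Fin 3) F) :
    cross (vecMul u M) (vecMul u' M) = vecMul (cross u u') M.adjugateᵀ := by
  funext i
  fin_cases i <;>
    simp [cross, vecMul, dotProduct, Fin.sum_univ_three, adjugate_fin_three] <;> ring

lemma crossC (v v' : Fin 3 → F) (M : Matrix (Fin 3) (Fin 3) F) :
    cross (vecMul v M.adjugateᵀ) (vecMul v' M.adjugateᵀ) = M.det • vecMul (cross v v') M := by
  funext i
  fin_cases i <;>
    simp [cross, vecMul, dotProduct, Fin.sum_univ_three, adjugate_fin_three, det_fin_three,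
      smul_eq_mul] <;> ring

lemma slMap_slMap (g h : Matrix.SpecialLinearGroup (Fin 3) F) (a : Zorn F) :
    slMap h (slMap g a) = slMap (g * h) a := by
  simp [slMap, vecMul_vecMul, ← transpose_mul, _root_.mul_inv_rev,
    Matrix.SpecialLinearGroup.coe_mul]

lemma slMap_one' (a : Zorn F) : slMap (1 : Matrix.SpecialLinearGroup (Fin 3) F) a = a := by
  simp [slMap]

end Zorn

/-- for every `g ∈ SL₃(F)`, the map `(α,u;v,β) ↦ (α, ug; v(g⁻¹)ᵀ, β)` is an
`F`-algebra automorphism of the split octonions. -/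
theorem zorn_slMap_isAlgAut {F : Type*} [Field F] (g : Matrix.SpecialLinearGroup (Fin 3) F) :
    Function.Bijective (Zorn.slMap g) ∧
    (∀ a b : Zorn F, Zorn.slMap g (a + b) = Zorn.slMap g a + Zorn.slMap g b) ∧
    (∀ (c : F) (a : Zorn F), Zorn.slMap g (c • a) = c • Zorn.slMap g a) ∧
    (∀ a b : Zorn F, Zorn.slMap g (a * b) = Zorn.slMap g a * Zorn.slMap g b) ∧
    Zorn.slMap g (1 : Zorn F) = 1 := by
  classical
  have hdet : ((g : Matrix (Fin 3) (Fin 3) F)).det = 1 := g.prop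
  have hinv : ((g⁻¹ : Matrix.SpecialLinearGroup (Fin 3) F) : Matrix (Fin 3) (Fin 3) F)
      = ((g : Matrix (Fin 3) (Fin 3) F)).adjugate := Matrix.SpecialLinearGroup.coe_inv g
  refine ⟨?_, ?_, ?_, ?_, ?_⟩
  · refine Function.bijective_iff_has_inverse.2 ⟨Zorn.slMap g⁻¹, fun a => ?_, fun a => ?_⟩
    · rw [Zorn.slMap_slMap, mul_inv_cancel, Zorn.slMap_one']
    · rw [Zorn.slMap_slMap, inv_mul_cancel, Zorn.slMap_one']
  · intro a b
    simp [Zorn.slMap, Matrix.add_vecMul]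
  · intro c a
    simp [Zorn.slMap, Matrix.smul_vecMul]
  · intro a b
    simp only [Zorn.slMap, Zorn.mul_def', hinv]
    refine Zorn.ext ?_ ?_ ?_ ?_
    · simp [Zorn.dotA, hdet]
    · simp [Matrix.sub_vecMul, Matrix.add_vecMul, Matrix.smul_vecMul, Zorn.crossC, hdet]
    · simp [Matrix.add_vecMul, Matrix.smul_vecMul, Zorn.crossB]
    · simp [Zorn.dotA', hdet]
  · simp [Zorn.slMap, Zorn.one_def']
end

section
/- Let α, β ∈ F and let a = c(α,β) be the Zorn matrix (α, (β,0,0); (1,0,0), 0) in the split-octonion algebra O. Then for every n ≥ 2, aⁿ is the Zorn matrix (p_n(α,β), (β·p_{n−1}(α,β), 0, 0); (p_{n−1}(α,β), 0, 0), β·p_{n−2}(α,β)). -/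
namespace Zorn

variable {F : Type*} [Field F]

/-- Iterated powers of a split octonion (well defined by power-associativity). -/
def pow (a : Zorn F) : ℕ → Zorn F
  | 0 => 1
  | n + 1 => a * pow a n

/-- `P y z n` is the generalized Fibonacci polynomial `p_{n-1}(y,z)`:
`p_{-1} = 0`, `p_0 = 1`, `p_{k+1} = y p_k + z p_{k-1}`. -/
def P (y z : F) : ℕ → F
  | 0 => 0
  | 1 => 1
  | n + 2 => y * P y z (n + 1) + z * P y z n

/-- `f̂(y,z) = Σ_{k=1}^n α_k p_{k-1}(y,z)`. -/
def fHat (n : ℕ) (α : ℕ → F) (y z : F) : F := ∑ k ∈ Finset.Icc 1 n, α k * P y z k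

/-- `f̌(y,z) = Σ_{k=1}^n α_k p_{k-2}(y,z)`. -/
def fCheck (n : ℕ) (α : ℕ → F) (y z : F) : F := ∑ k ∈ Finset.Icc 1 n, α k * P y z (k - 1)

/-- `f(x) = Σ_{k=1}^n α_k x^k` for `x` in the split octonions. -/
def fOct (n : ℕ) (α : ℕ → F) (x : Zorn F) : Zorn F := ∑ k ∈ Finset.Icc 1 n, α k • pow x k

/-- `f(ν) = Σ_{k=1}^n α_k ν^k` for `ν ∈ F`. -/
def fScalar (n : ℕ) (α : ℕ → F) (y : F) : F := ∑ k ∈ Finset.Icc 1 n, α k * y ^ k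

/-- `g : O → O` is an `F`-algebra automorphism of the split octonions. -/
def IsAlgAut (g : Zorn F → Zorn F) : Prop :=
  Function.Bijective g ∧ (∀ a b, g (a + b) = g a + g b) ∧
    (∀ (c : F) (a : Zorn F), g (c • a) = c • g a) ∧
    (∀ a b, g (a * b) = g a * g b) ∧ g 1 = 1

/-- The `Aut(O)`-orbit of a split octonion. -/
def orbit (a : Zorn F) : Set (Zorn F) := {x | ∃ g, IsAlgAut g ∧ g a = x}

/-- The canonical octonion `c(α,β)`. -/
def cmat (α β : F) : Zorn F := ⟨α, ![β, 0, 0], ![1, 0, 0], 0⟩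

end Zorn

lemma Zorn.mul_def {F : Type*} [Field F] (a b : Zorn F) :
    a * b =
      ⟨a.x1 * b.x1 + Zorn.dot a.u b.v,
       a.x1 • b.u + b.x2 • a.u - Zorn.cross a.v b.v,
       b.x1 • a.v + a.x2 • b.v + Zorn.cross a.u b.u,
       a.x2 * b.x2 + Zorn.dot a.v b.u⟩ := rfl

lemma Zorn.one_def'_s13 {F : Type*} [Field F] : (1 : Zorn F) = ⟨1, 0, 0, 1⟩ := rfl

/-- for `a = c(α,β)` and `n ≥ 2`,
`aⁿ = (p_n(α,β), (β p_{n−1}(α,β),0,0); (p_{n−1}(α,β),0,0), β p_{n−2}(α,β))`.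
(Here `Zorn.P y z k = p_{k-1}(y,z)`.) -/
theorem zorn_pow_canonical {F : Type*} [Field F] (α β : F) (n : ℕ) (hn : 2 ≤ n) :
    Zorn.pow (Zorn.cmat α β) n =
      ⟨Zorn.P α β (n + 1), ![β * Zorn.P α β n, 0, 0], ![Zorn.P α β n, 0, 0],
        β * Zorn.P α β (n - 1)⟩ := by
  have h : ∀ m : ℕ, 1 ≤ m → Zorn.pow (Zorn.cmat α β) m =
      ⟨Zorn.P α β (m + 1), ![β * Zorn.P α β m, 0, 0], ![Zorn.P α β m, 0, 0],
        β * Zorn.P α β (m - 1)⟩ := by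
    intro m hm
    induction m, hm using Nat.le_induction with
    | base =>
      show Zorn.cmat α β * (1 : Zorn F) = _
      rw [Zorn.mul_def, Zorn.one_def'_s13]
      ext <;> simp [Zorn.cmat, Zorn.dot, Zorn.cross, Zorn.P] <;>
        (rename_i i; fin_cases i <;> simp [Zorn.P])
    | succ m hm ih =>
      obtain ⟨k, rfl⟩ : ∃ k, m = k + 1 := ⟨m - 1, (Nat.succ_pred_eq_of_pos hm).symm⟩
      show Zorn.cmat α β * Zorn.pow (Zorn.cmat α β) (k + 1) = _
      rw [ih, Zorn.mul_def]
      ext <;> simp [Zorn.cmat, Zorn.dot, Zorn.cross, Zorn.P] <;>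
        (rename_i i; fin_cases i <;> simp [Zorn.P] <;> ring)
  exact h n (le_trans one_le_two hn)
end

section
/- Let f(y) ∈ F[y] be a nonzero polynomial without constant term and let c ∈ O be an element not of the form γ·1 with γ ∈ F. Then x ∈ O satisfies f(x) = c if and only if there exist λ, μ ∈ F such that λ·f̂(λ,μ) + 2μ·f̌(λ,μ) = tr(c), −μ·f̂(λ,μ)² + λμ·f̂(λ,μ)·f̌(λ,μ) + μ²·f̌(λ,μ)² = n(c), f̂(λ,μ) ≠ 0, and x = (1/f̂(λ,μ))·(c − μ·f̌(λ,μ)·1). In this case tr(x) = λ and n(x) = −μ. -/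
namespace ZornAux

open Zorn

variable {F : Type*} [Field F]

lemma mk_mul (a b : Zorn F) : a * b =
    ⟨a.x1 * b.x1 + dot a.u b.v,
     a.x1 • b.u + b.x2 • a.u - cross a.v b.v,
     b.x1 • a.v + a.x2 • b.v + cross a.u b.u,
     a.x2 * b.x2 + dot a.v b.u⟩ := rfl

lemma one_def : (1 : Zorn F) = ⟨1, 0, 0, 1⟩ := rfl

lemma mul_one' (a : Zorn F) : a * 1 = a := by
    ext i <;> (try fin_cases i) <;>
    simp [mk_mul, one_def, dot, cross, Zorn.trace, Zorn.norm, Matrix.cons_val_zero,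
      Matrix.cons_val_one, Matrix.head_cons, Matrix.cons_val_two, Matrix.tail_cons,
      Matrix.vecHead, Matrix.vecTail, Function.comp] <;> ring

set_option maxHeartbeats 1000000 in
lemma mul_add' (a b c : Zorn F) : a * (b + c) = a * b + a * c := by
  ext i <;> (try fin_cases i) <;>
    simp [mk_mul, one_def, dot, cross, Zorn.trace, Zorn.norm, Matrix.cons_val_zero,
      Matrix.cons_val_one, Matrix.head_cons, Matrix.cons_val_two, Matrix.tail_cons,
      Matrix.vecHead, Matrix.vecTail, Function.comp] <;> ring

set_option maxHeartbeats 1000000 in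
lemma mul_smul' (e : F) (a b : Zorn F) : a * (e • b) = e • (a * b) := by
  ext i <;> (try fin_cases i) <;>
    simp [mk_mul, one_def, dot, cross, Zorn.trace, Zorn.norm, Matrix.cons_val_zero,
      Matrix.cons_val_one, Matrix.head_cons, Matrix.cons_val_two, Matrix.tail_cons,
      Matrix.vecHead, Matrix.vecTail, Function.comp] <;> ring

set_option maxHeartbeats 1000000 in
lemma x_mul_x (x : Zorn F) : x * x = trace x • x + (-norm x) • 1 := by
  ext i <;> (try fin_cases i) <;>
    simp [mk_mul, one_def, dot, cross, Zorn.trace, Zorn.norm, Matrix.cons_val_zero,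
      Matrix.cons_val_one, Matrix.head_cons, Matrix.cons_val_two, Matrix.tail_cons,
      Matrix.vecHead, Matrix.vecTail, Function.comp] <;> ring

lemma pow_formula (x : Zorn F) (k : ℕ) :
    pow x (k + 1) = P (trace x) (-norm x) (k + 1) • x +
      (-norm x * P (trace x) (-norm x) k) • 1 := by
  induction k with
  | zero =>
      show x * pow x 0 = _
      simp [pow, P, mul_one']
  | succ k ih =>
      show x * pow x (k + 1) = _
      have hP : P (trace x) (-Zorn.norm x) (k + 1 + 1) =
          trace x * P (trace x) (-Zorn.norm x) (k + 1) +
            -Zorn.norm x * P (trace x) (-Zorn.norm x) k := rfl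
      rw [ih, mul_add', mul_smul', mul_smul', mul_one', x_mul_x, hP]
      module

lemma trace_combo (a b : F) (y : Zorn F) :
    trace (a • y + b • 1) = a * trace y + 2 * b := by
  simp [Zorn.trace, one_def]; ring

lemma norm_combo (a b : F) (y : Zorn F) :
    norm (a • y + b • 1) = a ^ 2 * norm y + a * b * trace y + b ^ 2 := by
  simp [Zorn.norm, Zorn.trace, one_def, dot]; ring

lemma fOct_formula (n : ℕ) (α : ℕ → F) (x : Zorn F) :
    fOct n α x = fHat n α (trace x) (-norm x) • x +
      (-norm x * fCheck n α (trace x) (-norm x)) • 1 := by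
  rw [fOct, fHat, fCheck, Finset.sum_smul, Finset.mul_sum, Finset.sum_smul,
    ← Finset.sum_add_distrib]
  apply Finset.sum_congr rfl
  intro k hk
  have hk1 : 1 ≤ k := (Finset.mem_Icc.mp hk).1
  obtain ⟨j, rfl⟩ : ∃ j, k = j + 1 := ⟨k - 1, by omega⟩
  rw [pow_formula, smul_add, smul_smul, smul_smul]
  simp [mul_comm, mul_assoc, mul_left_comm]

lemma trace_sub_smul (c : Zorn F) (b : F) : trace (c - b • 1) = trace c - 2 * b := by
  simp [Zorn.trace, one_def]; ring

lemma norm_sub_smul (c : Zorn F) (b : F) :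
    norm (c - b • 1) = norm c - b * trace c + b ^ 2 := by
  simp [Zorn.norm, Zorn.trace, one_def, dot]; ring

lemma trace_smul' (e : F) (a : Zorn F) : trace (e • a) = e * trace a := by
  simp [Zorn.trace]; ring

lemma norm_smul' (e : F) (a : Zorn F) : norm (e • a) = e ^ 2 * norm a := by
  simp [Zorn.norm, dot]; ring

end ZornAux

/-- for `c` non-scalar, `x` solves `f(x) = c` iff there are `λ, μ ∈ F` with
`λ f̂(λ,μ) + 2μ f̌(λ,μ) = tr(c)`, `−μ f̂(λ,μ)² + λμ f̂(λ,μ) f̌(λ,μ) + μ² f̌(λ,μ)² = n(c)`,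
`f̂(λ,μ) ≠ 0` and `x = f̂(λ,μ)⁻¹ (c − μ f̌(λ,μ)·1)`; in this case `tr(x) = λ`, `n(x) = −μ`. -/
theorem zorn_solutions_nonscalar_rhs {F : Type*} [Field F] (n : ℕ) (hn : 1 ≤ n) (α : ℕ → F)
    (hα : α n ≠ 0) (c : Zorn F) (hc : ∀ γ : F, c ≠ γ • (1 : Zorn F)) (x : Zorn F) :
    (Zorn.fOct n α x = c ↔ ∃ l m : F,
      l * Zorn.fHat n α l m + 2 * m * Zorn.fCheck n α l m = Zorn.trace c ∧
      -(m * Zorn.fHat n α l m ^ 2) + l * m * Zorn.fHat n α l m * Zorn.fCheck n α l m +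
        m ^ 2 * Zorn.fCheck n α l m ^ 2 = Zorn.norm c ∧
      Zorn.fHat n α l m ≠ 0 ∧
      x = (Zorn.fHat n α l m)⁻¹ • (c - (m * Zorn.fCheck n α l m) • (1 : Zorn F))) ∧
    (∀ l m : F,
      (l * Zorn.fHat n α l m + 2 * m * Zorn.fCheck n α l m = Zorn.trace c ∧
       -(m * Zorn.fHat n α l m ^ 2) + l * m * Zorn.fHat n α l m * Zorn.fCheck n α l m +
         m ^ 2 * Zorn.fCheck n α l m ^ 2 = Zorn.norm c ∧
       Zorn.fHat n α l m ≠ 0 ∧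
       x = (Zorn.fHat n α l m)⁻¹ • (c - (m * Zorn.fCheck n α l m) • (1 : Zorn F))) →
      Zorn.trace x = l ∧ Zorn.norm x = -m) := by
  have key : ∀ l m : F,
      (l * Zorn.fHat n α l m + 2 * m * Zorn.fCheck n α l m = Zorn.trace c ∧
       -(m * Zorn.fHat n α l m ^ 2) + l * m * Zorn.fHat n α l m * Zorn.fCheck n α l m +
         m ^ 2 * Zorn.fCheck n α l m ^ 2 = Zorn.norm c ∧
       Zorn.fHat n α l m ≠ 0 ∧
       x = (Zorn.fHat n α l m)⁻¹ • (c - (m * Zorn.fCheck n α l m) • (1 : Zorn F))) →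
      Zorn.trace x = l ∧ Zorn.norm x = -m := by
    rintro l m ⟨h1, h2, h3, rfl⟩
    constructor
    · rw [ZornAux.trace_smul', ZornAux.trace_sub_smul]
      field_simp
      linear_combination -h1
    · rw [ZornAux.norm_smul', ZornAux.norm_sub_smul]
      field_simp
      linear_combination -h2 + (m * Zorn.fCheck n α l m) * h1
  refine ⟨⟨?_, ?_⟩, key⟩
  · intro hfx
    set L := Zorn.trace x with hL
    set M := -Zorn.norm x with hM
    have hF := ZornAux.fOct_formula n α x
    rw [← hL, ← hM] at hF
    have hhat : Zorn.fHat n α L M ≠ 0 := by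
      intro h0
      rw [hfx, h0, zero_smul, zero_add] at hF
      exact hc (M * Zorn.fCheck n α L M) hF
    refine ⟨L, M, ?_, ?_, hhat, ?_⟩
    · rw [← hfx, hF, ZornAux.trace_combo, ← hL]
      ring
    · rw [← hfx, hF, ZornAux.norm_combo, ← hL]
      have : Zorn.norm x = -M := by rw [hM]; ring
      rw [this]
      ring
    · rw [← hfx, hF, add_sub_cancel_right, smul_smul, inv_mul_cancel₀ hhat, one_smul]
  · rintro ⟨l, m, h1, h2, h3, hx⟩
    obtain ⟨htr, hnm⟩ := key l m ⟨h1, h2, h3, hx⟩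
    rw [ZornAux.fOct_formula, htr, hnm, neg_neg, hx, smul_smul,
      mul_inv_cancel₀ h3, one_smul, sub_add_cancel]
end

section
/- Assume char F = 2. Let f(y) ∈ F[y] be a nonzero polynomial without constant term and let c ∈ O be an element not of the form γ·1 with γ ∈ F. If tr(c) ≠ 0, then x ∈ O satisfies f(x) = c if and only if there exist λ ∈ F with λ ≠ 0 and μ ∈ F such that μ²·f̌(λ,μ)² + μ·tr(c)·f̌(λ,μ) = n(c) + (μ/λ²)·tr(c)², λ·f̂(λ,μ) = tr(c), and x = (λ/tr(c))·(c + μ·f̌(λ,μ)·1). If tr(c) = 0, then x ∈ O satisfies f(x) = c if and only if there exists μ ∈ F such that μ·f̂(0,μ)² + μ²·f̌(0,μ)² = n(c), f̂(0,μ) ≠ 0, and x = (1/f̂(0,μ))·(c + μ·f̌(0,μ)·1). In each case tr(x) = λ (with λ = 0 when tr(c) = 0) and n(x) = −μ. -/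
namespace Zorn
variable {F : Type*} [Field F]

lemma ext3 {f g : Fin 3 → F} (h : ∀ i, f i = g i) : f = g := funext h

lemma zext {a b : Zorn F} (h1 : a.x1 = b.x1) (hu : ∀ i, a.u i = b.u i)
    (hv : ∀ i, a.v i = b.v i) (h2 : a.x2 = b.x2) : a = b :=
  Zorn.ext h1 (ext3 hu) (ext3 hv) h2

@[simp] lemma cross0 (x y : Fin 3 → F) : cross x y 0 = x 1 * y 2 - x 2 * y 1 := rfl
@[simp] lemma cross1 (x y : Fin 3 → F) : cross x y 1 = x 2 * y 0 - x 0 * y 2 := rfl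
@[simp] lemma cross2 (x y : Fin 3 → F) : cross x y 2 = x 0 * y 1 - x 1 * y 0 := rfl

@[simp] lemma mul_x1 (a b : Zorn F) : (a * b).x1 = a.x1 * b.x1 + dot a.u b.v := rfl
@[simp] lemma mul_x2 (a b : Zorn F) : (a * b).x2 = a.x2 * b.x2 + dot a.v b.u := rfl
@[simp] lemma mul_uu (a b : Zorn F) (i : Fin 3) :
    (a * b).u i = a.x1 * b.u i + b.x2 * a.u i - cross a.v b.v i := rfl
@[simp] lemma mul_vv (a b : Zorn F) (i : Fin 3) :
    (a * b).v i = b.x1 * a.v i + a.x2 * b.v i + cross a.u b.u i := rfl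

@[simp] lemma add_x1 (a b : Zorn F) : (a + b).x1 = a.x1 + b.x1 := rfl
@[simp] lemma add_x2 (a b : Zorn F) : (a + b).x2 = a.x2 + b.x2 := rfl
@[simp] lemma add_uu (a b : Zorn F) (i : Fin 3) : (a + b).u i = a.u i + b.u i := rfl
@[simp] lemma add_vv (a b : Zorn F) (i : Fin 3) : (a + b).v i = a.v i + b.v i := rfl

@[simp] lemma smul_x1 (c : F) (a : Zorn F) : (c • a).x1 = c * a.x1 := rfl
@[simp] lemma smul_x2 (c : F) (a : Zorn F) : (c • a).x2 = c * a.x2 := rfl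
@[simp] lemma smul_uu (c : F) (a : Zorn F) (i : Fin 3) : (c • a).u i = c * a.u i := rfl
@[simp] lemma smul_vv (c : F) (a : Zorn F) (i : Fin 3) : (c • a).v i = c * a.v i := rfl

@[simp] lemma sub_x1 (a b : Zorn F) : (a - b).x1 = a.x1 - b.x1 := rfl
@[simp] lemma sub_x2 (a b : Zorn F) : (a - b).x2 = a.x2 - b.x2 := rfl
@[simp] lemma sub_uu (a b : Zorn F) (i : Fin 3) : (a - b).u i = a.u i - b.u i := rfl
@[simp] lemma sub_vv (a b : Zorn F) (i : Fin 3) : (a - b).v i = a.v i - b.v i := rfl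

@[simp] lemma one_x1 : (1 : Zorn F).x1 = 1 := rfl
@[simp] lemma one_x2 : (1 : Zorn F).x2 = 1 := rfl
@[simp] lemma one_u : (1 : Zorn F).u = 0 := rfl
@[simp] lemma one_v : (1 : Zorn F).v = 0 := rfl

lemma mul_one' (a : Zorn F) : a * 1 = a := by
  refine zext ?_ (fun i => ?_) (fun i => ?_) ?_ <;> (try fin_cases i) <;> simp [dot]

lemma sq_eq (x : Zorn F) : x * x = trace x • x - norm x • 1 := by
  refine zext ?_ (fun i => ?_) (fun i => ?_) ?_ <;> (try fin_cases i) <;>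
    simp [dot, trace, norm] <;> ring

lemma mul_lin (x y z : Zorn F) (a b : F) :
    x * (a • y + b • z) = a • (x * y) + b • (x * z) := by
  refine zext ?_ (fun i => ?_) (fun i => ?_) ?_ <;> (try fin_cases i) <;> simp [dot] <;> ring

end Zorn

namespace Zorn
variable {F : Type*} [Field F]

lemma trace_add' (a b : Zorn F) : trace (a + b) = trace a + trace b := by
  simp [trace]; ring

lemma trace_smul' (γ : F) (a : Zorn F) : trace (γ • a) = γ * trace a := by
  simp [trace]; ring

lemma trace_smul_one (γ : F) : trace (γ • (1 : Zorn F)) = γ + γ := by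
  simp [trace]

lemma norm_smul' (γ : F) (a : Zorn F) : norm (γ • a) = γ ^ 2 * norm a := by
  simp [norm, dot]; ring

lemma norm_add_smul_one (a : Zorn F) (γ : F) :
    norm (a + γ • (1 : Zorn F)) = norm a + γ * trace a + γ ^ 2 := by
  simp [norm, trace, dot]; ring

lemma pow_formula (x : Zorn F) (k : ℕ) :
    pow x (k + 1) = P (trace x) (-norm x) (k + 1) • x +
      ((-norm x) * P (trace x) (-norm x) k) • (1 : Zorn F) := by
  induction k with
  | zero => simp [pow, P, mul_one']
  | succ j ih =>
    have h : pow x (j + 2) = x * pow x (j + 1) := rfl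
    have hP : P (trace x) (-norm x) (j + 2) =
        trace x * P (trace x) (-norm x) (j + 1) + (-norm x) * P (trace x) (-norm x) j := rfl
    rw [h, ih, mul_lin, sq_eq, mul_one', hP]
    module

lemma fOct_formula (n : ℕ) (α : ℕ → F) (x : Zorn F) :
    fOct n α x = fHat n α (trace x) (-norm x) • x +
      ((-norm x) * fCheck n α (trace x) (-norm x)) • (1 : Zorn F) := by
  unfold fOct fHat fCheck
  rw [Finset.sum_smul, Finset.mul_sum, Finset.sum_smul, ← Finset.sum_add_distrib]
  refine Finset.sum_congr rfl fun k hk => ?_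
  obtain ⟨j, rfl⟩ : ∃ j, k = j + 1 :=
    ⟨k - 1, by have := Finset.mem_Icc.mp hk; omega⟩
  rw [pow_formula]
  simp only [Nat.add_sub_cancel]
  module

end Zorn

namespace Zorn
variable {F : Type*} [Field F]

/-- char-2 helper: trace/norm of the candidate solution, `tr c ≠ 0` case. -/
lemma tn1 (h2 : (2:F) = 0) {c x : Zorn F} {l m C : F} (hl : l ≠ 0) (htc : trace c ≠ 0)
    (hii : m ^ 2 * C ^ 2 + m * trace c * C = norm c + m / l ^ 2 * trace c ^ 2)
    (hx : x = (l / trace c) • (c + (m * C) • (1 : Zorn F))) :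
    trace x = l ∧ norm x = -m := by
  subst hx
  constructor
  · rw [trace_smul', trace_add', trace_smul_one]
    have hmm : m * C + m * C = 0 := by linear_combination (m * C) * h2
    rw [hmm, add_zero, div_mul_cancel₀ _ htc]
  · rw [norm_smul', norm_add_smul_one]
    have hii' : m ^ 2 * C ^ 2 * l ^ 2 + m * trace c * C * l ^ 2 =
        norm c * l ^ 2 + m * trace c ^ 2 := by
      field_simp at hii
      linear_combination hii
    field_simp
    linear_combination (l^2*m*C*trace c + l^2*m^2*C^2 + m*trace c^2 - trace c^2*m) * h2 - hii'

end Zorn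

namespace Zorn
variable {F : Type*} [Field F]

/-- char-2 helper: trace/norm of the candidate solution, `tr c = 0` case. -/
lemma tn0 (h2 : (2:F) = 0) {c x : Zorn F} {m H C : F} (htc : trace c = 0)
    (hii : m * H ^ 2 + m ^ 2 * C ^ 2 = norm c) (hH : H ≠ 0)
    (hx : x = H⁻¹ • (c + (m * C) • (1 : Zorn F))) :
    trace x = 0 ∧ norm x = -m := by
  subst hx
  constructor
  · rw [trace_smul', trace_add', trace_smul_one, htc]
    have hmm : m * C + m * C = 0 := by linear_combination (m * C) * h2
    rw [zero_add, hmm, mul_zero]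
  · rw [norm_smul', norm_add_smul_one, htc, mul_zero, add_zero]
    rw [← hii]
    field_simp
    linear_combination (H^2*m + m^2*C^2) * h2

end Zorn

namespace Zorn
variable {F : Type*} [Field F]

lemma rev1 (h2 : (2:F) = 0) {n : ℕ} {α : ℕ → F} {c x : Zorn F} {l m : F}
    (hl : l ≠ 0) (htc : trace c ≠ 0)
    (hiii : l * fHat n α l m = trace c)
    (ht : trace x = l) (hnm : norm x = -m)
    (hx : x = (l / trace c) • (c + (m * fCheck n α l m) • (1 : Zorn F))) :
    fOct n α x = c := by
  rw [fOct_formula, ht, hnm, neg_neg, hx, smul_smul]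
  have hH : fHat n α l m * (l / trace c) = 1 := by
    field_simp
    linear_combination hiii
  rw [hH, one_smul, add_assoc, ← add_smul]
  have hz : m * fCheck n α l m + m * fCheck n α l m = 0 := by
    linear_combination (m * fCheck n α l m) * h2
  rw [hz, zero_smul, add_zero]

lemma rev0 (h2 : (2:F) = 0) {n : ℕ} {α : ℕ → F} {c x : Zorn F} {m : F}
    (htc : trace c = 0)
    (hii : m * fHat n α 0 m ^ 2 + m ^ 2 * fCheck n α 0 m ^ 2 = norm c)
    (hH : fHat n α 0 m ≠ 0)
    (hx : x = (fHat n α 0 m)⁻¹ • (c + (m * fCheck n α 0 m) • (1 : Zorn F))) :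
    fOct n α x = c := by
  obtain ⟨ht, hnm⟩ := tn0 h2 htc hii hH hx
  rw [fOct_formula, ht, hnm, neg_neg, hx, smul_smul, mul_inv_cancel₀ hH, one_smul,
    add_assoc, ← add_smul]
  have hz : m * fCheck n α 0 m + m * fCheck n α 0 m = 0 := by
    linear_combination (m * fCheck n α 0 m) * h2
  rw [hz, zero_smul, add_zero]

end Zorn

namespace Zorn
variable {F : Type*} [Field F]

lemma fwd_common (h2 : (2:F) = 0) {n : ℕ} {α : ℕ → F} {c x : Zorn F}
    (hc : ∀ γ : F, c ≠ γ • (1 : Zorn F)) (hfx : fOct n α x = c) :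
    fHat n α (trace x) (-norm x) ≠ 0 ∧
    fHat n α (trace x) (-norm x) * trace x = trace c ∧
    fHat n α (trace x) (-norm x) • x =
      c + ((-norm x) * fCheck n α (trace x) (-norm x)) • (1 : Zorn F) := by
  set t := trace x
  set z := -norm x
  set H := fHat n α t z with hHdef
  set C := fCheck n α t z with hCdef
  have heq : H • x + (z * C) • 1 = c := by rw [← hfx, fOct_formula]
  have hH0 : H ≠ 0 := by
    intro h
    rw [h, zero_smul, zero_add] at heq
    exact hc (z * C) heq.symm
  have htr : H * t = trace c := by
    have h := congrArg trace heq
    rw [trace_add', trace_smul', trace_smul_one] at h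
    linear_combination h - (z * C) * h2
  refine ⟨hH0, htr, ?_⟩
  have hzz : (z * C) • (1 : Zorn F) + (z * C) • (1 : Zorn F) = 0 := by
    rw [← add_smul]
    have h : z * C + z * C = 0 := by linear_combination (z * C) * h2
    rw [h, zero_smul]
  calc H • x = H • x + ((z * C) • (1 : Zorn F) + (z * C) • (1 : Zorn F)) := by
        rw [hzz, add_zero]
    _ = (H • x + (z * C) • 1) + (z * C) • 1 := by abel
    _ = c + (z * C) • 1 := by rw [heq]

lemma fwd1 (h2 : (2:F) = 0) {n : ℕ} {α : ℕ → F} {c x : Zorn F}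
    (hc : ∀ γ : F, c ≠ γ • (1 : Zorn F)) (htc : trace c ≠ 0)
    (hfx : fOct n α x = c) :
    ∃ l m : F, l ≠ 0 ∧
      m ^ 2 * fCheck n α l m ^ 2 + m * trace c * fCheck n α l m =
        norm c + m / l ^ 2 * trace c ^ 2 ∧
      l * fHat n α l m = trace c ∧
      x = (l / trace c) • (c + (m * fCheck n α l m) • (1 : Zorn F)) := by
  obtain ⟨hH0, htr, hsx⟩ := fwd_common h2 hc hfx
  set t := trace x with htdef
  set z := -norm x with hzdef
  set H := fHat n α t z with hHdef
  set C := fCheck n α t z with hCdef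
  have ht0 : t ≠ 0 := fun h => htc (by rw [← htr, h, mul_zero])
  have hx : x = (t / trace c) • (c + (z * C) • (1 : Zorn F)) := by
    have h1 : t / trace c * H = 1 := by
      field_simp
      linear_combination htr
    calc x = (t / trace c * H) • x := by rw [h1, one_smul]
      _ = (t / trace c) • (H • x) := by rw [mul_smul]
      _ = _ := by rw [hsx]
  have hnormx : norm x = -z := by rw [hzdef, neg_neg]
  have key := congrArg norm hx
  rw [norm_smul', norm_add_smul_one, hnormx] at key
  refine ⟨t, z, ht0, ?_, by linear_combination htr, hx⟩
  field_simp at key ⊢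
  linear_combination key + (x.norm^2 * fCheck n α t z^2 * t^2 - x.norm * fCheck n α t z * trace c * t^2) * h2
end Zorn

namespace Zorn
variable {F : Type*} [Field F]

lemma fwd0 (h2 : (2:F) = 0) {n : ℕ} {α : ℕ → F} {c x : Zorn F}
    (hc : ∀ γ : F, c ≠ γ • (1 : Zorn F)) (htc : trace c = 0)
    (hfx : fOct n α x = c) :
    ∃ m : F,
      m * fHat n α 0 m ^ 2 + m ^ 2 * fCheck n α 0 m ^ 2 = norm c ∧
      fHat n α 0 m ≠ 0 ∧
      x = (fHat n α 0 m)⁻¹ • (c + (m * fCheck n α 0 m) • (1 : Zorn F)) := by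
  obtain ⟨hH0, htr, hsx⟩ := fwd_common h2 hc hfx
  set t := trace x with htdef
  set z := -norm x with hzdef
  set H := fHat n α t z with hHdef
  set C := fCheck n α t z with hCdef
  have ht0 : t = 0 := by
    rcases mul_eq_zero.mp (htr.trans htc) with h | h
    · exact absurd h hH0
    · exact h
  have hHe : fHat n α 0 z = H := by rw [hHdef, ht0]
  have hCe : fCheck n α 0 z = C := by rw [hCdef, ht0]
  have hx : x = H⁻¹ • (c + (z * C) • (1 : Zorn F)) := by
    rw [← hsx, inv_smul_smul₀ hH0]
  have hnormx : norm x = -z := by rw [hzdef, neg_neg]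
  have key := congrArg norm hx
  rw [norm_smul', norm_add_smul_one, hnormx, htc, mul_zero, add_zero] at key
  refine ⟨z, ?_, ?_, ?_⟩
  · rw [hHe, hCe]
    field_simp at key ⊢
    linear_combination key + (-(x.norm * H^2) + x.norm^2 * C^2) * h2
  · rw [hHe]; exact hH0
  · rw [hHe, hCe]; exact hx

end Zorn
/-- assume `char F = 2` and `c` non-scalar.  If `tr(c) ≠ 0` then `x` solves
`f(x) = c` iff there are `λ ≠ 0` and `μ` with
`μ² f̌(λ,μ)² + μ tr(c) f̌(λ,μ) = n(c) + (μ/λ²) tr(c)²`, `λ f̂(λ,μ) = tr(c)` and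
`x = (λ/tr(c)) (c + μ f̌(λ,μ)·1)`.  If `tr(c) = 0` then `x` solves `f(x) = c` iff there is `μ`
with `μ f̂(0,μ)² + μ² f̌(0,μ)² = n(c)`, `f̂(0,μ) ≠ 0` and `x = f̂(0,μ)⁻¹ (c + μ f̌(0,μ)·1)`.
In each case `tr(x) = λ` (with `λ = 0` when `tr(c) = 0`) and `n(x) = −μ`. -/
theorem zorn_solutions_char_two {F : Type*} [Field F] (hF : ringChar F = 2)
    (n : ℕ) (hn : 1 ≤ n) (α : ℕ → F) (hα : α n ≠ 0)
    (c : Zorn F) (hc : ∀ γ : F, c ≠ γ • (1 : Zorn F)) (x : Zorn F) :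
    (Zorn.trace c ≠ 0 →
      (Zorn.fOct n α x = c ↔ ∃ l m : F, l ≠ 0 ∧
        m ^ 2 * Zorn.fCheck n α l m ^ 2 + m * Zorn.trace c * Zorn.fCheck n α l m =
          Zorn.norm c + m / l ^ 2 * Zorn.trace c ^ 2 ∧
        l * Zorn.fHat n α l m = Zorn.trace c ∧
        x = (l / Zorn.trace c) • (c + (m * Zorn.fCheck n α l m) • (1 : Zorn F))) ∧
      (∀ l m : F,
        (l ≠ 0 ∧
         m ^ 2 * Zorn.fCheck n α l m ^ 2 + m * Zorn.trace c * Zorn.fCheck n α l m =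
           Zorn.norm c + m / l ^ 2 * Zorn.trace c ^ 2 ∧
         l * Zorn.fHat n α l m = Zorn.trace c ∧
         x = (l / Zorn.trace c) • (c + (m * Zorn.fCheck n α l m) • (1 : Zorn F))) →
        Zorn.trace x = l ∧ Zorn.norm x = -m)) ∧
    (Zorn.trace c = 0 →
      (Zorn.fOct n α x = c ↔ ∃ m : F,
        m * Zorn.fHat n α 0 m ^ 2 + m ^ 2 * Zorn.fCheck n α 0 m ^ 2 = Zorn.norm c ∧
        Zorn.fHat n α 0 m ≠ 0 ∧
        x = (Zorn.fHat n α 0 m)⁻¹ • (c + (m * Zorn.fCheck n α 0 m) • (1 : Zorn F))) ∧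
      (∀ m : F,
        (m * Zorn.fHat n α 0 m ^ 2 + m ^ 2 * Zorn.fCheck n α 0 m ^ 2 = Zorn.norm c ∧
         Zorn.fHat n α 0 m ≠ 0 ∧
         x = (Zorn.fHat n α 0 m)⁻¹ • (c + (m * Zorn.fCheck n α 0 m) • (1 : Zorn F))) →
        Zorn.trace x = 0 ∧ Zorn.norm x = -m)) := by

  have h2 : (2:F) = 0 := by
    have h : ((2:ℕ):F) = 0 := by rw [← hF]; exact ringChar.Nat.cast_ringChar
    simpa using h
  constructor
  · intro htc
    refine ⟨⟨fun hfx => Zorn.fwd1 h2 hc htc hfx, ?_⟩, ?_⟩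
    · rintro ⟨l, m, hl, hii, hiii, hx⟩
      obtain ⟨ht, hnm⟩ := Zorn.tn1 h2 hl htc hii hx
      exact Zorn.rev1 h2 hl htc hiii ht hnm hx
    · rintro l m ⟨hl, hii, hiii, hx⟩
      exact Zorn.tn1 h2 hl htc hii hx
  · intro htc
    refine ⟨⟨fun hfx => Zorn.fwd0 h2 hc htc hfx, ?_⟩, ?_⟩
    · rintro ⟨m, hii, hH, hx⟩
      exact Zorn.rev0 h2 htc hii hH hx
    · rintro m ⟨hii, hH, hx⟩
      exact Zorn.tn0 h2 htc hii hH hx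
end
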